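/- Let α > 0 and β ∈ (0,1). Then sup over all s ∈ ℝ and all θ with |θ| < π of the quantity (1 + |s|)^α (π - |θ|)^α e^{θ s} / |sin(π(β + is))| is finite. -/

import Mathlib

open MeasureTheory Set Real

/-!
Writing `π(β + is) = x + iy`, one has `|sin(x + iy)| ≥ |Re sin(x + iy)| = |sin x| cosh y`, so the
denominator grows like `sin(πβ) e^{π|s|} / 2`. In the numerator, `e^{θs} ≤ e^{|θ||s|}` and the
polynomial factor `((1 + |s|)(π - |θ|))^α ≤ (π + (π - |θ|)|s|)^α` is absorbed by `e^{π + (π - |θ|)|s|}`;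
the two exponentials combine to `e^π e^{π|s|}`.
-/

lemma abs_sin_mul_exp_abs_le_two_mul_norm_sin (x y : ℝ) :
    |Real.sin x| * Real.exp |y| ≤ 2 * ‖Complex.sin (x + y * Complex.I)‖ := by
  have hre : (Complex.sin (x + y * Complex.I)).re = Real.sin x * Real.cosh y := by
    rw [Complex.sin_add_mul_I]
    simp [← Complex.ofReal_sin, ← Complex.ofReal_cos, ← Complex.ofReal_cosh,
      ← Complex.ofReal_sinh]
  have hexp : Real.exp |y| ≤ 2 * Real.cosh y := by
    rw [Real.cosh_eq]; linarith [Real.exp_abs_le y]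
  calc |Real.sin x| * Real.exp |y| ≤ |Real.sin x| * (2 * Real.cosh y) := by gcongr
    _ = 2 * |(Complex.sin (x + y * Complex.I)).re| := by
      rw [hre, abs_mul, abs_of_pos (Real.cosh_pos y)]; ring
    _ ≤ 2 * ‖Complex.sin (x + y * Complex.I)‖ := by gcongr; exact Complex.abs_re_le_norm _

lemma rpow_le_rpow_self_mul_exp {α x : ℝ} (hα : 0 ≤ α) (hx : 0 ≤ x) :
    x ^ α ≤ α ^ α * Real.exp x := by
  simpa [abs_of_nonneg hx] using ProbabilityTheory.rpow_abs_le_mul_exp_abs x hα one_ne_zero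

lemma one_add_abs_rpow_mul_sub_abs_rpow_mul_exp_le {α L : ℝ} (hα : 0 ≤ α) {θ : ℝ} (hθ : |θ| ≤ L)
    (s : ℝ) :
    (1 + |s|) ^ α * (L - |θ|) ^ α * Real.exp (θ * s) ≤
      α ^ α * Real.exp L * Real.exp (L * |s|) := by
  have hs := abs_nonneg s
  have hgap : 0 ≤ L - |θ| := sub_nonneg.2 hθ
  have hprod : (1 + |s|) * (L - |θ|) ≤ L + (L - |θ|) * |s| := by
    nlinarith [abs_nonneg θ]
  have hpoly : (1 + |s|) ^ α * (L - |θ|) ^ α ≤ α ^ α * Real.exp (L + (L - |θ|) * |s|) :=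
    calc (1 + |s|) ^ α * (L - |θ|) ^ α = ((1 + |s|) * (L - |θ|)) ^ α :=
          (Real.mul_rpow (by positivity) hgap).symm
      _ ≤ (L + (L - |θ|) * |s|) ^ α := by gcongr
      _ ≤ α ^ α * Real.exp (L + (L - |θ|) * |s|) :=
          rpow_le_rpow_self_mul_exp hα (add_nonneg ((abs_nonneg θ).trans hθ) (mul_nonneg hgap hs))
  have hθs : θ * s ≤ |θ| * |s| := abs_mul θ s ▸ le_abs_self _
  calc (1 + |s|) ^ α * (L - |θ|) ^ α * Real.exp (θ * s)
      ≤ α ^ α * Real.exp (L + (L - |θ|) * |s|) * Real.exp (|θ| * |s|) := by gcongr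
    _ = α ^ α * Real.exp L * Real.exp (L * |s|) := by
      rw [mul_assoc, mul_assoc, ← Real.exp_add, ← Real.exp_add]; ring_nf

theorem stmt_8 (α : ℝ) (hα : 0 < α) (β : ℝ) (hβ : β ∈ Ioo (0 : ℝ) 1) :
    ∃ C : ℝ, ∀ s θ : ℝ, |θ| < π →
      (1 + |s|) ^ α * (π - |θ|) ^ α * Real.exp (θ * s) /
          ‖Complex.sin ((π : ℂ) * ((β : ℂ) + (s : ℂ) * Complex.I))‖ ≤ C := by
  have hc : 0 < Real.sin (π * β) :=
    Real.sin_pos_of_pos_of_lt_pi (by nlinarith [pi_pos, hβ.1]) (by nlinarith [pi_pos, hβ.2])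
  refine ⟨2 * α ^ α * Real.exp π / Real.sin (π * β), fun s θ hθ => ?_⟩
  have harg : (π : ℂ) * ((β : ℂ) + (s : ℂ) * Complex.I) =
      ((π * β : ℝ) : ℂ) + ((π * s : ℝ) : ℂ) * Complex.I := by push_cast; ring
  have hden := abs_sin_mul_exp_abs_le_two_mul_norm_sin (π * β) (π * s)
  rw [abs_of_pos hc, abs_mul, abs_of_pos pi_pos, ← harg] at hden
  have hnum := one_add_abs_rpow_mul_sub_abs_rpow_mul_exp_le hα.le hθ.le s
  have hnorm : 0 < ‖Complex.sin ((π : ℂ) * ((β : ℂ) + (s : ℂ) * Complex.I))‖ := by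
    linarith [mul_pos hc (Real.exp_pos (π * |s|))]
  rw [div_le_div_iff₀ hnorm hc]
  calc (1 + |s|) ^ α * (π - |θ|) ^ α * Real.exp (θ * s) * Real.sin (π * β)
      ≤ α ^ α * Real.exp π * Real.exp (π * |s|) * Real.sin (π * β) := by gcongr
    _ = α ^ α * Real.exp π * (Real.sin (π * β) * Real.exp (π * |s|)) := by ring
    _ ≤ α ^ α * Real.exp π *
          (2 * ‖Complex.sin ((π : ℂ) * ((β : ℂ) + (s : ℂ) * Complex.I))‖) := by gcongr
    _ = _ := by ring
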